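/- Let $a \geq 1$ be an integer and let $\Psi : \mathbb{R}^d \to \mathbb{R}$ be a smooth compactly supported function. Then there exists a constant $C < \infty$, depending only on $a$ and $d$ (but not on $\Psi$), such that $\int_{\mathbb{R}^d} \frac{\Delta\Psi(x)\,\Psi(x)}{1+|x|^{2a}}\,dx \leq C \int_{\mathbb{R}^d} \frac{\Psi(x)^2}{1+|x|^{2a}}\,dx$. -/

import Mathlib

open MeasureTheory

/-- The Laplacian of `f : ℝ^d → ℝ` at `x`, as the trace of the second derivative. -/
noncomputable def laplacian {d : ℕ} (f : EuclideanSpace ℝ (Fin d) → ℝ)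
    (x : EuclideanSpace ℝ (Fin d)) : ℝ :=
  ∑ i : Fin d, iteratedFDeriv ℝ 2 f x (fun _ => EuclideanSpace.single i 1)

section weight

variable {d : ℕ}

local notation "E" => EuclideanSpace ℝ (Fin d)
local notation "e" i => EuclideanSpace.single i (1:ℝ)

/-- sum of squares of coordinates -/
noncomputable def sq' (x : E) : ℝ := ∑ j, x j ^ 2

lemma sq'_nonneg (x : E) : 0 ≤ sq' x := Finset.sum_nonneg fun _ _ => sq_nonneg _

lemma sq'_eq (x : E) : sq' x = ‖x‖ ^ 2 := by
  rw [EuclideanSpace.norm_eq, Real.sq_sqrt (Finset.sum_nonneg fun _ _ => sq_nonneg _)]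
  simp [sq', Real.norm_eq_abs, sq_abs]

lemma single_self_sq (x : E) (i : Fin d) : x i ^ 2 ≤ sq' x :=
  Finset.single_le_sum (f := fun j => x j ^ 2) (fun _ _ => sq_nonneg _) (Finset.mem_univ i)

noncomputable def S' (x : E) : E →L[ℝ] ℝ := ∑ j, (2 * x j) • (EuclideanSpace.proj j)

lemma hasFDerivAt_sq' (x : E) : HasFDerivAt sq' (S' x) x := by
  have : ∀ j : Fin d, HasFDerivAt (fun y : E => y j ^ 2)
      ((2 * x j) • (EuclideanSpace.proj j : E →L[ℝ] ℝ)) x := by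
    intro j
    have h1 : HasFDerivAt (fun y : E => y j) (EuclideanSpace.proj j : E →L[ℝ] ℝ) x := by
      simpa using (EuclideanSpace.proj (𝕜 := ℝ) j).hasFDerivAt (x := x)
    have h2 := (hasDerivAt_pow 2 (x j)).comp_hasFDerivAt x h1
    simpa [Function.comp_def] using h2
  exact HasFDerivAt.fun_sum (fun j (_ : j ∈ Finset.univ) => this j)

lemma S'_apply (x : E) (i : Fin d) : S' x (e i) = 2 * x i := by
  simp [S', EuclideanSpace.single_apply, Finset.sum_ite_eq', mul_comm]

lemma diff_sq' : Differentiable ℝ (sq' (d := d)) :=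
  fun x => (hasFDerivAt_sq' x).differentiableAt

lemma fd_mul {f g : E → ℝ} {x : E} (hf : DifferentiableAt ℝ f x)
    (hg : DifferentiableAt ℝ g x) (v : E) :
    fderiv ℝ (fun y => f y * g y) x v = f x * fderiv ℝ g x v + g x * fderiv ℝ f x v := by
  rw [fderiv_fun_mul hf hg]; simp

lemma fd_pow {f : E → ℝ} {x : E} (hf : DifferentiableAt ℝ f x) (n : ℕ) (v : E) :
    fderiv ℝ (fun y => f y ^ n) x v = n * f x ^ (n - 1) * fderiv ℝ f x v := by
  have h := ((hasDerivAt_pow n (f x)).comp_hasFDerivAt x hf.hasFDerivAt).fderiv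
  rw [Function.comp_def] at h
  rw [h]; simp [mul_assoc]

lemma fd_inv {f : E → ℝ} {x : E} (hf : DifferentiableAt ℝ f x) (h0 : f x ≠ 0) (v : E) :
    fderiv ℝ (fun y => (f y)⁻¹) x v = -(f x ^ 2)⁻¹ * fderiv ℝ f x v := by
  have h := ((hasDerivAt_inv h0).comp_hasFDerivAt x hf.hasFDerivAt).fderiv
  rw [Function.comp_def] at h
  rw [h]; simp [mul_assoc]

lemma fd_sq' (x : E) (i : Fin d) : fderiv ℝ sq' x (e i) = 2 * x i := by
  rw [(hasFDerivAt_sq' x).fderiv, S'_apply]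

variable (a : ℕ)

/-- the weight -/
noncomputable def wgt (x : E) : ℝ := (1 + sq' x ^ a)⁻¹

lemma u_pos (x : E) : (0:ℝ) < 1 + sq' x ^ a := by
  have h := sq'_nonneg x; positivity

lemma wgt_pos (x : E) : 0 < wgt a x := by
  unfold wgt
  have h := u_pos a x; positivity

lemma hasFDerivAt_u (x : E) :
    HasFDerivAt (fun y : E => 1 + sq' y ^ a) ((a * sq' x ^ (a - 1)) • S' x) x := by
  have := ((hasDerivAt_pow a (sq' x)).comp_hasFDerivAt x (hasFDerivAt_sq' x)).const_add 1
  simpa [Function.comp_def] using this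

lemma hasFDerivAt_wgt (x : E) :
    HasFDerivAt (wgt a)
      ((-((1 + sq' x ^ a) ^ 2)⁻¹ * (a * sq' x ^ (a - 1))) • S' x) x := by
  have h := (hasDerivAt_inv (x := 1 + sq' x ^ a) (u_pos a x).ne').comp_hasFDerivAt x
    (hasFDerivAt_u a x)
  have : wgt a = (fun t : ℝ => t⁻¹) ∘ (fun y : E => 1 + sq' y ^ a) := rfl
  rw [this]
  refine h.congr_fderiv ?_
  rw [smul_smul, neg_mul, neg_smul]

lemma diff_wgt : Differentiable ℝ (wgt (d := d) a) :=
  fun x => (hasFDerivAt_wgt a x).differentiableAt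

/-- first partial of the weight -/
noncomputable def Wf (i : Fin d) (x : E) : ℝ :=
  -((1 + sq' x ^ a) ^ 2)⁻¹ * (↑a * sq' x ^ (a - 1)) * (2 * x i)

lemma fderiv_wgt' (x : E) (i : Fin d) : fderiv ℝ (wgt a) x (e i) = Wf a i x := by
  rw [(hasFDerivAt_wgt a x).fderiv]
  simp [S'_apply, Wf, mul_assoc]

lemma diff_u : Differentiable ℝ (fun y : E => 1 + sq' y ^ a) :=
  (diff_sq'.pow a).const_add 1

lemma diff_A : Differentiable ℝ (fun y : E => -((1 + sq' y ^ a) ^ 2)⁻¹) :=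
  (((diff_u a).pow 2).inv (fun x => (pow_ne_zero 2 (u_pos a x).ne'))).neg

lemma diff_B : Differentiable ℝ (fun y : E => (a:ℝ) * sq' y ^ (a - 1)) :=
  (diff_sq'.pow (a-1)).const_mul _

lemma diff_C (i : Fin d) : Differentiable ℝ (fun y : E => 2 * y i) :=
  fun x => (((EuclideanSpace.proj (𝕜 := ℝ) i).differentiable x).const_mul 2 : _)

lemma diff_Wf (i : Fin d) : Differentiable ℝ (Wf a i) :=
  (((diff_A a).mul (diff_B a)).mul (diff_C i) : _)

lemma fd_u (x : E) (i : Fin d) :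
    fderiv ℝ (fun y : E => 1 + sq' y ^ a) x (e i) = a * sq' x ^ (a-1) * (2 * x i) := by
  have : fderiv ℝ (fun y : E => 1 + sq' y ^ a) x = fderiv ℝ (fun y : E => sq' y ^ a) x :=
    fderiv_const_add _
  rw [this, fd_pow (diff_sq' x) a, fd_sq']

lemma fd_A (x : E) (i : Fin d) :
    fderiv ℝ (fun y : E => -((1 + sq' y ^ a) ^ 2)⁻¹) x (e i) =
      (((1 + sq' x ^ a) ^ 2) ^ 2)⁻¹ * (2 * (1 + sq' x ^ a) * (a * sq' x ^ (a-1) * (2 * x i))) := by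
  rw [fderiv_fun_neg, ContinuousLinearMap.neg_apply,
    fd_inv (((diff_u a).fun_pow 2) x) (pow_ne_zero 2 (u_pos a x).ne'),
    fd_pow ((diff_u a) x) 2, fd_u]
  ring

lemma fd_B (x : E) (i : Fin d) :
    fderiv ℝ (fun y : E => (a:ℝ) * sq' y ^ (a - 1)) x (e i) =
      a * ((a - 1 : ℕ) * sq' x ^ (a - 1 - 1) * (2 * x i)) := by
  rw [fderiv_const_mul (a := fun y => sq' y ^ (a-1)) ((diff_sq'.pow (a-1)) x), ContinuousLinearMap.smul_apply,
    fd_pow (diff_sq' x) (a-1), fd_sq']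
  simp

lemma fd_C (x : E) (i : Fin d) : fderiv ℝ (fun y : E => 2 * y i) x (e i) = 2 := by
  have h0 : HasFDerivAt (fun y : E => y i) (EuclideanSpace.proj (𝕜 := ℝ) i) x := by
    simpa using (EuclideanSpace.proj (𝕜 := ℝ) i).hasFDerivAt (x := x)
  have h : HasFDerivAt (fun y : E => 2 * y i)
      ((2:ℝ) • (EuclideanSpace.proj (𝕜 := ℝ) i)) x := h0.const_mul 2
  rw [h.fderiv]
  simp [EuclideanSpace.single_apply]

lemma fderiv_Wf_eval (x : E) (i : Fin d) :
    fderiv ℝ (Wf a i) x (e i) =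
      (-((1 + sq' x ^ a) ^ 2)⁻¹ * (↑a * sq' x ^ (a - 1))) * 2
      + (2 * x i) * (-((1 + sq' x ^ a) ^ 2)⁻¹ *
            (↑a * ((a - 1 : ℕ) * sq' x ^ (a - 1 - 1) * (2 * x i))))
      + (2 * x i) * ((↑a * sq' x ^ (a - 1)) *
            ((((1 + sq' x ^ a) ^ 2) ^ 2)⁻¹ *
              (2 * (1 + sq' x ^ a) * (↑a * sq' x ^ (a - 1) * (2 * x i))))) := by
  have h : Wf a i = fun y : E =>
      (-((1 + sq' y ^ a) ^ 2)⁻¹ * (↑a * sq' y ^ (a - 1))) * (2 * y i) := rfl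
  rw [h, fd_mul (((diff_A a).fun_mul (diff_B a)) x) ((diff_C i) x),
    fd_mul ((diff_A a) x) ((diff_B a) x), fd_C, fd_A, fd_B]
  ring

lemma cont_fderiv_Wf (i : Fin d) :
    Continuous (fun x : E => fderiv ℝ (Wf a i) x (e i)) := by
  have hformula : (fun x : E => fderiv ℝ (Wf a i) x (e i)) = fun x : E =>
      (-((1 + sq' x ^ a) ^ 2)⁻¹ * (↑a * sq' x ^ (a - 1))) * 2
      + (2 * x i) * (-((1 + sq' x ^ a) ^ 2)⁻¹ *
            (↑a * ((a - 1 : ℕ) * sq' x ^ (a - 1 - 1) * (2 * x i))))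
      + (2 * x i) * ((↑a * sq' x ^ (a - 1)) *
            ((((1 + sq' x ^ a) ^ 2) ^ 2)⁻¹ *
              (2 * (1 + sq' x ^ a) * (↑a * sq' x ^ (a - 1) * (2 * x i))))) :=
    funext fun x => fderiv_Wf_eval a x i
  rw [hformula]
  have csq : Continuous (sq' (d := d)) := diff_sq'.continuous
  have cu : Continuous (fun x : E => 1 + sq' x ^ a) := (diff_u a).continuous
  have cproj : Continuous (fun x : E => x i) :=
    (EuclideanSpace.proj (𝕜 := ℝ) i).continuous
  have cinv1 : Continuous (fun x : E => ((1 + sq' x ^ a) ^ 2)⁻¹) :=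
    (cu.pow 2).inv₀ fun x => pow_ne_zero 2 (u_pos a x).ne'
  have cinv2 : Continuous (fun x : E => (((1 + sq' x ^ a) ^ 2) ^ 2)⁻¹) :=
    ((cu.pow 2).pow 2).inv₀ fun x => pow_ne_zero 2 (pow_ne_zero 2 (u_pos a x).ne')
  fun_prop

lemma fderiv_Wf_le (ha : 1 ≤ a) (x : E) (i : Fin d) :
    fderiv ℝ (Wf a i) x (e i) ≤ 8 * (a:ℝ)^2 * wgt a x := by
  rw [fderiv_Wf_eval]
  set t := sq' x with htdef
  have htn : 0 ≤ t := sq'_nonneg x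
  set u : ℝ := 1 + t ^ a with hudef
  have hu1 : (1:ℝ) ≤ u := by
    have : 0 ≤ t ^ a := pow_nonneg htn a
    simp only [hudef]; linarith
  have hu : (0:ℝ) < u := lt_of_lt_of_le one_pos hu1
  have hx2 : x i ^ 2 ≤ t := single_self_sq x i
  have hkey : x i ^ 2 * (t ^ (a - 1)) ^ 2 ≤ u ^ 2 := by
    have step1 : x i ^ 2 * (t ^ (a - 1)) ^ 2 ≤ t * (t ^ (a - 1)) ^ 2 :=
      mul_le_mul_of_nonneg_right hx2 (sq_nonneg _)
    have step2 : t * (t ^ (a - 1)) ^ 2 = t ^ (2 * a - 1) := by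
      rw [← pow_mul, ← pow_succ']
      congr 1
      omega
    have step3 : t ^ (2 * a - 1) ≤ u ^ 2 := by
      rcases le_or_gt t 1 with h | h
      · have h1 : t ^ (2 * a - 1) ≤ 1 := pow_le_one₀ htn h
        have h2 : (1:ℝ) ≤ u ^ 2 := one_le_pow₀ hu1
        linarith
      · have h1 : t ^ (2 * a - 1) ≤ t ^ (2 * a) := pow_le_pow_right₀ h.le (by omega)
        have h2 : t ^ (2 * a) = (t ^ a) ^ 2 := by rw [← pow_mul, mul_comm]
        have h3 : (t ^ a) ^ 2 ≤ u ^ 2 := by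
          apply pow_le_pow_left₀ (pow_nonneg htn a)
          simp only [hudef]; linarith
        linarith
    linarith [step1, step2 ▸ step1, step3]
  have h1 : (-((u) ^ 2)⁻¹ * (↑a * t ^ (a - 1))) * 2 ≤ 0 := by
    have : (0:ℝ) ≤ ((u) ^ 2)⁻¹ * (↑a * t ^ (a - 1)) * 2 := by positivity
    nlinarith [this]
  have h2 : (2 * x i) * (-((u) ^ 2)⁻¹ *
      (↑a * ((a - 1 : ℕ) * t ^ (a - 1 - 1) * (2 * x i)))) ≤ 0 := by
    have heq : (2 * x i) * (-((u) ^ 2)⁻¹ *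
        (↑a * ((a - 1 : ℕ) * t ^ (a - 1 - 1) * (2 * x i)))) =
        -(((u) ^ 2)⁻¹ * (↑a * ((a - 1 : ℕ) * t ^ (a - 1 - 1))) * (4 * x i ^ 2)) := by
      ring
    rw [heq, neg_nonpos]
    positivity
  have h3 : (2 * x i) * ((↑a * t ^ (a - 1)) *
      ((((u) ^ 2) ^ 2)⁻¹ * (2 * u * (↑a * t ^ (a - 1) * (2 * x i))))) ≤
      8 * (a:ℝ)^2 * u⁻¹ := by
    have heq : (2 * x i) * ((↑a * t ^ (a - 1)) *
        ((((u) ^ 2) ^ 2)⁻¹ * (2 * u * (↑a * t ^ (a - 1) * (2 * x i))))) =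
        8 * (a:ℝ)^2 * (x i ^ 2 * (t ^ (a - 1)) ^ 2) * (u ^ 3)⁻¹ := by
      field_simp
      ring
    rw [heq]
    have hb : 8 * (a:ℝ)^2 * (x i ^ 2 * (t ^ (a - 1)) ^ 2) * (u ^ 3)⁻¹ ≤
        8 * (a:ℝ)^2 * u ^ 2 * (u ^ 3)⁻¹ := by
      gcongr
    have he : 8 * (a:ℝ)^2 * u ^ 2 * (u ^ 3)⁻¹ = 8 * (a:ℝ)^2 * u⁻¹ := by
      field_simp
    linarith [hb, he ▸ hb]
  have hw : wgt a x = u⁻¹ := rfl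
  rw [hw]
  linarith

end weight

/-- For integer `a ≥ 1` and smooth compactly supported `Ψ : ℝ^d → ℝ`, there is a constant
`C` depending only on `a` and `d` such that
`∫ ΔΨ(x) Ψ(x) / (1+|x|^{2a}) dx ≤ C ∫ Ψ(x)² / (1+|x|^{2a}) dx`. -/
theorem stmt_0 (d a : ℕ) (ha : 1 ≤ a) :
    ∃ C : ℝ, ∀ Ψ : EuclideanSpace ℝ (Fin d) → ℝ,
      ContDiff ℝ (⊤ : ℕ∞) Ψ → HasCompactSupport Ψ →
      ∫ x, laplacian Ψ x * Ψ x / (1 + ‖x‖ ^ (2 * a)) ≤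
        C * ∫ x, (Ψ x) ^ 2 / (1 + ‖x‖ ^ (2 * a)) := by
  classical
  refine ⟨4 * (d:ℝ) * (a:ℝ)^2, ?_⟩
  intro Ψ hΨ hc
  set v : Fin d → EuclideanSpace ℝ (Fin d) := fun i => EuclideanSpace.single i (1:ℝ) with hv
  set D : Fin d → EuclideanSpace ℝ (Fin d) → ℝ := fun i x => fderiv ℝ Ψ x (v i) with hDdef
  have contΨ : Continuous Ψ := hΨ.continuous
  have diffΨ : Differentiable ℝ Ψ := hΨ.differentiable (by simp)
  have hfd : ContDiff ℝ (⊤ : ℕ∞) (fderiv ℝ Ψ) := hΨ.fderiv_right (by simp)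
  have hDsm : ∀ i, ContDiff ℝ (⊤ : ℕ∞) (D i) := fun i => hfd.clm_apply contDiff_const
  have diffD : ∀ i, Differentiable ℝ (D i) := fun i => (hDsm i).differentiable (by simp)
  have contD : ∀ i, Continuous (D i) := fun i => (hDsm i).continuous
  have csD : ∀ i, HasCompactSupport (D i) := fun i => hc.fderiv_apply ℝ (v i)
  have contD2 : ∀ i, Continuous (fun x => fderiv ℝ (D i) x (v i)) := fun i =>
    ((((hDsm i).fderiv_right (m := (⊤ : ℕ∞)) (by simp)).clm_apply contDiff_const).continuous : _)
  have contw : Continuous (wgt (d := d) a) := (diff_wgt a).continuous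
  have contWf : ∀ i : Fin d, Continuous (Wf a i) := fun i => (diff_Wf a i).continuous
  -- second derivative identity
  have hDD : ∀ (i : Fin d) (x : EuclideanSpace ℝ (Fin d)), fderiv ℝ (D i) x (v i) =
      iteratedFDeriv ℝ 2 Ψ x (fun _ => v i) := by
    intro i x
    rw [iteratedFDeriv_two_apply]
    have hT : HasFDerivAt (D i)
        ((ContinuousLinearMap.apply ℝ ℝ (v i)).comp (fderiv ℝ (fderiv ℝ Ψ) x)) x := by
      exact (ContinuousLinearMap.apply ℝ ℝ (v i)).hasFDerivAt.comp x
        ((hfd.differentiable (by simp)) x).hasFDerivAt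
    rw [hT.fderiv]
    rfl
  -- integrability of the various integrands
  have key_int : ∀ f : EuclideanSpace ℝ (Fin d) → ℝ, Continuous f → HasCompactSupport f → Integrable f :=
    fun f hf hcs => hf.integrable_of_hasCompactSupport hcs
  have int1 : ∀ i : Fin d, Integrable (fun x => (Ψ x * wgt a x) * fderiv ℝ (D i) x (v i)) :=
    fun i => key_int _ ((contΨ.mul contw).mul (contD2 i)) ((hc.mul_right).mul_right)
  have int2 : ∀ i : Fin d, Integrable (fun x => (Ψ x * Wf a i x + wgt a x * D i x) * D i x) :=
    fun i => key_int _ (((contΨ.mul (contWf i)).add (contw.mul (contD i))).mul (contD i))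
      ((csD i).mul_left)
  have int3 : ∀ i : Fin d, Integrable (fun x => (Ψ x * wgt a x) * D i x) :=
    fun i => key_int _ ((contΨ.mul contw).mul (contD i)) (hc.mul_right.mul_right)
  have int4 : ∀ i : Fin d, Integrable (fun x => Ψ x * Wf a i x * D i x) :=
    fun i => key_int _ ((contΨ.mul (contWf i)).mul (contD i)) (hc.mul_right.mul_right)
  have int5 : ∀ i : Fin d, Integrable (fun x => wgt a x * D i x * D i x) :=
    fun i => key_int _ ((contw.mul (contD i)).mul (contD i)) (((csD i).mul_left).mul_right)
  have csΨsq : HasCompactSupport (fun x => Ψ x ^ 2) :=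
    hc.comp_left (g := fun t : ℝ => t ^ 2) (by norm_num)
  have int6 : ∀ i : Fin d, Integrable (fun x => Ψ x ^ 2 * fderiv ℝ (Wf a i) x (v i)) :=
    fun i => key_int _ ((contΨ.pow 2).mul (cont_fderiv_Wf a i)) (csΨsq.mul_right)
  have int7 : ∀ i : Fin d, Integrable (fun x => 2 * Ψ x * D i x * Wf a i x) :=
    fun i => key_int _ ((((continuous_const.mul contΨ).mul (contD i)).mul (contWf i)))
      (((csD i).mul_left).mul_right)
  have int8 : Integrable (fun x => Ψ x ^ 2 * (8 * (d:ℝ) * (a:ℝ)^2 * wgt a x)) :=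
    key_int _ ((contΨ.pow 2).mul (continuous_const.mul contw)) (csΨsq.mul_right)
  have int9 : Integrable (fun x => Ψ x ^ 2 * wgt a x) :=
    key_int _ ((contΨ.pow 2).mul contw) (csΨsq.mul_right)
  have int10 : Integrable (fun x => Ψ x ^ 2 * (∑ i : Fin d, fderiv ℝ (Wf a i) x (v i))) :=
    key_int _ ((contΨ.pow 2).mul (continuous_finset_sum _ fun i _ => cont_fderiv_Wf a i))
      (csΨsq.mul_right)
  -- first integration by parts
  have ibp1 : ∀ i : Fin d, ∫ x, (Ψ x * wgt a x) * fderiv ℝ (D i) x (v i) =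
      -∫ x, (Ψ x * Wf a i x + wgt a x * D i x) * D i x := by
    intro i
    have hrw : (fun x => fderiv ℝ (fun y => Ψ y * wgt a y) x (v i) * D i x) =
        (fun x => (Ψ x * Wf a i x + wgt a x * D i x) * D i x) := by
      funext x
      rw [fd_mul (diffΨ x) (diff_wgt a x), fderiv_wgt']
    have h := integral_mul_fderiv_eq_neg_fderiv_mul_of_integrable (μ := volume)
      (f := fun x => Ψ x * wgt a x) (g := D i) (v := v i)
      (by rw [hrw]; exact int2 i) (int1 i) (int3 i) (fun x _ => (diffΨ.mul (diff_wgt a)) x) (fun x _ => diffD i x)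
    rw [h, hrw]
  -- second integration by parts
  have ibp2 : ∀ i : Fin d, ∫ x, Ψ x ^ 2 * fderiv ℝ (Wf a i) x (v i) =
      -∫ x, 2 * Ψ x * D i x * Wf a i x := by
    intro i
    have hrw : (fun x => fderiv ℝ (fun y => Ψ y ^ 2) x (v i) * Wf a i x) =
        (fun x => 2 * Ψ x * D i x * Wf a i x) := by
      funext x
      rw [fd_pow (diffΨ x) 2]
      norm_num
      exact Or.inl (Or.inl rfl)
    have h := integral_mul_fderiv_eq_neg_fderiv_mul_of_integrable (μ := volume)
      (f := fun x => Ψ x ^ 2) (g := Wf a i) (v := v i)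
      (by rw [hrw]; exact int7 i)
      (int6 i)
      (key_int _ ((contΨ.pow 2).mul (contWf i)) (csΨsq.mul_right))
      (fun x _ => (diffΨ.pow 2) x) (fun x _ => diff_Wf a i x)
    rw [h, hrw]
  -- per-coordinate estimate
  have est : ∀ i : Fin d, ∫ x, (Ψ x * wgt a x) * fderiv ℝ (D i) x (v i) ≤
      (1/2) * ∫ x, Ψ x ^ 2 * fderiv ℝ (Wf a i) x (v i) := by
    intro i
    rw [ibp1 i]
    have hsplit : ∫ x, (Ψ x * Wf a i x + wgt a x * D i x) * D i x
        = (∫ x, Ψ x * Wf a i x * D i x) + ∫ x, wgt a x * D i x * D i x := by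
      rw [← integral_add (int4 i) (int5 i)]
      congr 1; funext x; ring
    have hK : ∫ x, 2 * Ψ x * D i x * Wf a i x = 2 * ∫ x, Ψ x * Wf a i x * D i x := by
      rw [← integral_const_mul]
      congr 1; funext x; ring
    have hJ : 0 ≤ ∫ x, wgt a x * D i x * D i x := by
      apply integral_nonneg
      intro x
      have h1 := (wgt_pos a x).le
      have h2 := mul_self_nonneg (D i x)
      simp only [Pi.zero_apply]
      nlinarith
    have h2 := ibp2 i
    rw [hK] at h2
    rw [hsplit]
    linarith
  have hwgt_eq : ∀ x : EuclideanSpace ℝ (Fin d),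
      (1 + ‖x‖ ^ (2 * a)) = 1 + sq' x ^ a := by
    intro x
    rw [pow_mul, ← sq'_eq]
  have hLHS : (fun x : EuclideanSpace ℝ (Fin d) =>
        laplacian Ψ x * Ψ x / (1 + ‖x‖ ^ (2 * a))) =
      fun x => ∑ i : Fin d, (Ψ x * wgt a x) * fderiv ℝ (D i) x (v i) := by
    funext x
    rw [div_eq_mul_inv, hwgt_eq x]
    have hlap : laplacian Ψ x = ∑ i : Fin d, fderiv ℝ (D i) x (v i) := by
      unfold laplacian
      exact Finset.sum_congr rfl fun i _ => (hDD i x).symm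
    rw [hlap, Finset.sum_mul, Finset.sum_mul]
    refine Finset.sum_congr rfl fun i _ => ?_
    simp only [wgt]
    ring
  have hbound : ∀ x : EuclideanSpace ℝ (Fin d),
      Ψ x ^ 2 * (∑ i : Fin d, fderiv ℝ (Wf a i) x (v i)) ≤
        Ψ x ^ 2 * (8 * (d:ℝ) * (a:ℝ)^2 * wgt a x) := by
    intro x
    apply mul_le_mul_of_nonneg_left _ (sq_nonneg (Ψ x))
    calc ∑ i : Fin d, fderiv ℝ (Wf a i) x (v i)
        ≤ ∑ _i : Fin d, 8 * (a:ℝ)^2 * wgt a x :=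
          Finset.sum_le_sum fun i _ => fderiv_Wf_le a ha x i
      _ = (d:ℝ) * (8 * (a:ℝ)^2 * wgt a x) := by
          rw [Finset.sum_const, Finset.card_univ, Fintype.card_fin, nsmul_eq_mul]
      _ = 8 * (d:ℝ) * (a:ℝ)^2 * wgt a x := by ring
  calc ∫ x, laplacian Ψ x * Ψ x / (1 + ‖x‖ ^ (2 * a))
      = ∑ i : Fin d, ∫ x, (Ψ x * wgt a x) * fderiv ℝ (D i) x (v i) := by
        rw [hLHS, integral_finset_sum _ (fun i _ => int1 i)]
    _ ≤ ∑ i : Fin d, (1/2) * ∫ x, Ψ x ^ 2 * fderiv ℝ (Wf a i) x (v i) :=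
        Finset.sum_le_sum fun i _ => est i
    _ = (1/2) * ∫ x, Ψ x ^ 2 * ∑ i : Fin d, fderiv ℝ (Wf a i) x (v i) := by
        rw [← Finset.mul_sum, ← integral_finset_sum _ (fun i _ => int6 i)]
        congr 2
        funext x
        rw [Finset.mul_sum]
    _ ≤ (1/2) * ∫ x, Ψ x ^ 2 * (8 * (d:ℝ) * (a:ℝ)^2 * wgt a x) := by
        have := integral_mono int10 int8 hbound
        linarith
    _ = 4 * (d:ℝ) * (a:ℝ)^2 * ∫ x, (Ψ x) ^ 2 / (1 + ‖x‖ ^ (2 * a)) := by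
        have hfun : (fun x : EuclideanSpace ℝ (Fin d) =>
              Ψ x ^ 2 * (8 * (d:ℝ) * (a:ℝ)^2 * wgt a x)) =
            fun x => (8 * (d:ℝ) * (a:ℝ)^2) * ((Ψ x) ^ 2 / (1 + ‖x‖ ^ (2 * a))) := by
          funext x
          rw [div_eq_mul_inv, hwgt_eq x]
          simp only [wgt]
          ring
        rw [hfun, integral_const_mul]
        ring
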